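/- For each real m > 0 let Φ_m(x) denote the CDF of c_m(B_m − 1/2) where B_m is Beta((m+1)/m, (m+1)/m)-distributed, i.e. Φ_m(x) = (1/B(a_m,a_m)) ∫_0^{min(max(1/2 + x/c_m, 0), 1)} y^{1/m}(1−y)^{1/m} dy with a_m = (m+1)/m. Then for every x ∈ ℝ, lim_{m→0^+} Φ_m(x) = (1/√(2π)) ∫_{−∞}^{x} e^{−y²/2} dy, the standard Gaussian CDF evaluated at x. -/

import Mathlib

/-!
By symmetry of the Beta kernel and the substitution `y = 1/2 + t/c_m`, once `c_m ≥ 2|x|` the CDF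
is `1/2 + ∫₀ˣ f_m`, and Legendre's duplication formula turns the density into
`f_m(t) = 2 / (B(1/2, a_m) c_m) · (1 - (2t/c_m)²)^{1/m}`. Log-convexity of `Γ` squeezes
`a B(1/2, a)²` between `π` and `π (1 + 1/(2a))`, which gives `D → 2√π`, then `√ρ c_m → √2` and
`m c_m² → 8`. Hence the prefactor tends to `1/√(2π)` and `(1 - (2t/c_m)²)^{1/m} → exp(-t²/2)`;
since `f_m` is bounded by its prefactor on `|t| ≤ c_m/2`, dominated convergence concludes.
-/

open Filter MeasureTheory Real

/-- The Beta function `B(a,b) = Γ(a)Γ(b)/Γ(a+b)`. -/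
noncomputable def betaFn (a b : ℝ) : ℝ := Real.Gamma a * Real.Gamma b / Real.Gamma (a + b)

/-- `ρ = m/(2(m+2))`. -/
noncomputable def rhoC (m : ℝ) : ℝ := m / (2 * (m + 2))

/-- `D = ρ^{-1/2} B(1/2, (m+1)/m)`. -/
noncomputable def DC (m : ℝ) : ℝ := rhoC m ^ (-(1 / 2) : ℝ) * betaFn (1 / 2) ((m + 1) / m)

/-- `c_m = 2^{(m+1)/(m+2)} (m+1)^{1/(m+2)} / (D^{m/(m+2)} ρ^{1/2})`. -/
noncomputable def cC (m : ℝ) : ℝ :=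
  (2 : ℝ) ^ ((m + 1) / (m + 2)) * (m + 1) ^ (1 / (m + 2)) /
    (DC m ^ (m / (m + 2)) * rhoC m ^ ((1 : ℝ) / 2))

/-- The CDF of `c_m (B_m - 1/2)` where `B_m` is Beta((m+1)/m, (m+1)/m)-distributed. -/
noncomputable def limitCDF (m x : ℝ) : ℝ :=
  (1 / betaFn ((m + 1) / m) ((m + 1) / m)) *
    ∫ y in (0 : ℝ)..(min (max (1 / 2 + x / cC m) 0) 1), y ^ (1 / m) * (1 - y) ^ (1 / m)

open Set Topology

lemma betaFn_pos {a b : ℝ} (ha : 0 < a) (hb : 0 < b) : 0 < betaFn a b :=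
  ProbabilityTheory.beta_pos ha hb

lemma integral_rpow_mul_one_sub_rpow {p q : ℝ} (hp : 0 < p) (hq : 0 < q) :
    ∫ y in (0 : ℝ)..1, y ^ (p - 1) * (1 - y) ^ (q - 1) = betaFn p q := by
  have key := Complex.Gamma_mul_Gamma_eq_betaIntegral (s := p) (t := q)
    (by simpa using hp) (by simpa using hq)
  rw [Complex.betaIntegral, ← Complex.ofReal_add, Complex.Gamma_ofReal, Complex.Gamma_ofReal,
    Complex.Gamma_ofReal, ← Complex.ofReal_mul] at key
  have hcast :
      ∫ y in (0 : ℝ)..1, (y : ℂ) ^ ((p : ℂ) - 1) * (1 - (y : ℂ)) ^ ((q : ℂ) - 1)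
      = ((∫ y in (0 : ℝ)..1, y ^ (p - 1) * (1 - y) ^ (q - 1) : ℝ) : ℂ) := by
    rw [← intervalIntegral.integral_ofReal]
    refine intervalIntegral.integral_congr fun y hy => ?_
    rw [uIcc_of_le zero_le_one] at hy
    simp only [Complex.ofReal_mul, Complex.ofReal_cpow hy.1,
      Complex.ofReal_cpow (sub_nonneg.2 hy.2), Complex.ofReal_sub, Complex.ofReal_one]
  rw [hcast, ← Complex.ofReal_mul, Complex.ofReal_inj] at key
  rw [betaFn, key, mul_div_cancel_left₀ _ (Real.Gamma_pos_of_pos (add_pos hp hq)).ne']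

lemma betaFn_one_half (a : ℝ) :
    betaFn (1 / 2) a = √π * Real.Gamma a / Real.Gamma (a + 1 / 2) := by
  rw [betaFn, Real.Gamma_one_half_eq, add_comm]

lemma four_rpow_mul_betaFn_self {a : ℝ} (ha : 0 < a) :
    (4 : ℝ) ^ (a - 1) * betaFn a a = betaFn (1 / 2) a / 2 := by
  have hdup := Real.Gamma_mul_Gamma_add_half a
  have h4 : (4 : ℝ) ^ (a - 1) * (2 : ℝ) ^ (1 - 2 * a) = 1 / 2 := by
    rw [show (4 : ℝ) = 2 ^ (2 : ℝ) by norm_num, ← Real.rpow_mul zero_le_two,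
      ← Real.rpow_add two_pos, show 2 * (a - 1) + (1 - 2 * a) = -1 by ring, Real.rpow_neg_one,
      one_div]
  have hΓ2a := (Real.Gamma_pos_of_pos (by positivity : 0 < 2 * a)).ne'
  have hΓh := (Real.Gamma_pos_of_pos (by positivity : 0 < a + 1 / 2)).ne'
  rw [betaFn_one_half, betaFn, ← two_mul, div_div, mul_div_assoc',
    div_eq_div_iff hΓ2a (by positivity)]
  linear_combination (2 * (4 : ℝ) ^ (a - 1) * Real.Gamma a) * hdup
    + 2 * Real.Gamma (2 * a) * √π * Real.Gamma a * h4

lemma Gamma_sq_le_mul_Gamma {s t : ℝ} (hs : 0 < s) (ht : 0 < t) :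
    Real.Gamma ((s + t) / 2) ^ 2 ≤ Real.Gamma s * Real.Gamma t := by
  have h := Real.Gamma_mul_add_mul_le_rpow_Gamma_mul_rpow_Gamma hs ht
    one_half_pos one_half_pos (add_halves 1)
  rw [← Real.sqrt_eq_rpow, ← Real.sqrt_eq_rpow, ← Real.sqrt_mul (Real.Gamma_pos_of_pos hs).le,
    show 1 / 2 * s + 1 / 2 * t = (s + t) / 2 by ring] at h
  have h0 : 0 ≤ Real.Gamma ((s + t) / 2) := (Real.Gamma_pos_of_pos (by positivity)).le
  calc Real.Gamma ((s + t) / 2) ^ 2 ≤ Real.sqrt (Real.Gamma s * Real.Gamma t) ^ 2 := by gcongr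
    _ = _ := Real.sq_sqrt (mul_pos (Real.Gamma_pos_of_pos hs) (Real.Gamma_pos_of_pos ht)).le

lemma pi_le_mul_betaFn_one_half_sq {a : ℝ} (ha : 0 < a) :
    π ≤ a * betaFn (1 / 2) a ^ 2 := by
  have h := Gamma_sq_le_mul_Gamma ha (by linarith : 0 < a + 1)
  rw [show (a + (a + 1)) / 2 = a + 1 / 2 by ring, Real.Gamma_add_one ha.ne'] at h
  have hΓh := Real.Gamma_pos_of_pos (by positivity : 0 < a + 1 / 2)
  rw [betaFn_one_half, div_pow, mul_pow, Real.sq_sqrt pi_pos.le, mul_div_assoc',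
    le_div_iff₀ (by positivity)]
  nlinarith [pi_pos]

lemma mul_betaFn_one_half_sq_le {a : ℝ} (ha : 0 < a) :
    a * betaFn (1 / 2) a ^ 2 ≤ π * (1 + (2 * a)⁻¹) := by
  have h := Gamma_sq_le_mul_Gamma (by linarith : 0 < a + 1 / 2) (by linarith : 0 < a + 3 / 2)
  rw [show (a + 1 / 2 + (a + 3 / 2)) / 2 = a + 1 by ring, Real.Gamma_add_one ha.ne',
    show a + 3 / 2 = a + 1 / 2 + 1 by ring, Real.Gamma_add_one (by linarith)] at h
  have hΓh := Real.Gamma_pos_of_pos (by positivity : 0 < a + 1 / 2)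
  rw [betaFn_one_half, div_pow, mul_pow, Real.sq_sqrt pi_pos.le, mul_div_assoc',
    div_le_iff₀ (by positivity)]
  have hinv : (1 + (2 * a)⁻¹) * a = a + 1 / 2 := by field_simp
  refine le_of_mul_le_mul_right ?_ ha
  calc a * (π * Real.Gamma a ^ 2) * a = π * (a * Real.Gamma a) ^ 2 := by ring
    _ ≤ π * (Real.Gamma (a + 1 / 2) * ((a + 1 / 2) * Real.Gamma (a + 1 / 2))) := by gcongr
    _ = π * (1 + (2 * a)⁻¹) * Real.Gamma (a + 1 / 2) ^ 2 * a := by rw [← hinv]; ring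

lemma tendsto_mul_betaFn_one_half_sq :
    Tendsto (fun a ↦ a * betaFn (1 / 2) a ^ 2) atTop (𝓝 π) := by
  have hup : Tendsto (fun a : ℝ ↦ π * (1 + (2 * a)⁻¹)) atTop (𝓝 π) := by
    simpa using ((tendsto_inv_atTop_zero.comp (tendsto_id.const_mul_atTop two_pos)).const_add
      1).const_mul π
  refine tendsto_of_tendsto_of_tendsto_of_le_of_le' tendsto_const_nhds hup ?_ ?_
  · filter_upwards [eventually_gt_atTop 0] with a ha using pi_le_mul_betaFn_one_half_sq ha
  · filter_upwards [eventually_gt_atTop 0] with a ha using mul_betaFn_one_half_sq_le ha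

noncomputable def betaKernel (s y : ℝ) : ℝ := y ^ s * (1 - y) ^ s

lemma continuous_betaKernel {s : ℝ} (hs : 0 ≤ s) : Continuous (betaKernel s) :=
  (Real.continuous_rpow_const hs).mul ((Real.continuous_rpow_const hs).comp (by fun_prop))

lemma betaKernel_one_sub (s y : ℝ) : betaKernel s (1 - y) = betaKernel s y := by
  rw [betaKernel, betaKernel, sub_sub_cancel, mul_comm]

lemma integral_betaKernel {s : ℝ} (hs : -1 < s) :
    ∫ y in (0 : ℝ)..1, betaKernel s y = betaFn (s + 1) (s + 1) := by
  have h := integral_rpow_mul_one_sub_rpow (p := s + 1) (q := s + 1) (by linarith) (by linarith)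
  simp only [add_sub_cancel_right] at h
  exact h

lemma integral_betaKernel_zero_half {s : ℝ} (hs : 0 ≤ s) :
    ∫ y in (0 : ℝ)..(1 / 2), betaKernel s y = betaFn (s + 1) (s + 1) / 2 := by
  have hint := fun a b ↦ (continuous_betaKernel hs).intervalIntegrable (μ := volume) a b
  have hrefl :=
    intervalIntegral.integral_comp_sub_left (betaKernel s) (1 : ℝ) (a := 0) (b := 1 / 2)
  simp only [betaKernel_one_sub, sub_zero, show (1 : ℝ) - 1 / 2 = 1 / 2 by norm_num] at hrefl
  have h := intervalIntegral.integral_add_adjacent_intervals (hint 0 (1 / 2)) (hint (1 / 2) 1)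
  rw [← hrefl, integral_betaKernel (by linarith)] at h
  linarith

lemma integral_betaKernel_half_add_div {s : ℝ} (hs : 0 ≤ s) {c : ℝ} (hc : c ≠ 0) (x : ℝ) :
    ∫ y in (0 : ℝ)..(1 / 2 + x / c), betaKernel s y
      = betaFn (s + 1) (s + 1) / 2
        + c⁻¹ * ∫ t in (0 : ℝ)..x, betaKernel s (1 / 2 + t / c) := by
  have hint := fun a b ↦ (continuous_betaKernel hs).intervalIntegrable (μ := volume) a b
  have hsub := intervalIntegral.integral_comp_div_add (betaKernel s) hc (1 / 2) (a := 0) (b := x)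
  simp only [zero_div, zero_add, smul_eq_mul] at hsub
  rw [← intervalIntegral.integral_add_adjacent_intervals (hint 0 (1 / 2)) (hint _ _),
    integral_betaKernel_zero_half hs]
  simp_rw [add_comm (1 / 2 : ℝ) (_ / c), hsub, inv_mul_cancel_left₀ hc]

lemma betaKernel_one_half_add {s u : ℝ} (hu : |u| ≤ 1 / 2) :
    betaKernel s (1 / 2 + u) = (1 - (2 * u) ^ 2) ^ s / 4 ^ s := by
  obtain ⟨hl, hr⟩ := abs_le.1 hu
  rw [betaKernel, ← Real.mul_rpow (by linarith) (by linarith), ← Real.div_rpow _ zero_le_four]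
  · ring_nf
  · nlinarith

lemma tendsto_one_sub_div_sq_rpow {c : ℝ → ℝ} {L : ℝ}
    (hc : Tendsto (fun m ↦ m * c m ^ 2) (𝓝[>] 0) (𝓝 L)) (hL : L ≠ 0) (u : ℝ) :
    Tendsto (fun m ↦ (1 - (u / c m) ^ 2) ^ (1 / m)) (𝓝[>] 0) (𝓝 (exp (-u ^ 2 / L))) := by
  have hg : Tendsto (fun x ↦ x * -(u / c x⁻¹) ^ 2) atTop (𝓝 (-u ^ 2 / L)) := by
    refine (tendsto_const_nhds.div (hc.comp tendsto_inv_atTop_nhdsGT_zero) hL).congr fun x ↦ ?_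
    simp only [Pi.div_apply, Function.comp_apply, div_eq_mul_inv, mul_inv, inv_inv]
    ring
  refine ((Real.tendsto_one_add_rpow_exp_of_tendsto hg).comp tendsto_inv_nhdsGT_zero).congr
    fun m ↦ ?_
  simp only [Function.comp_apply, inv_inv, one_div, sub_eq_add_neg]

lemma integral_Iic_exp_neg_sq_div_two (x : ℝ) :
    ∫ y in Iic x, exp (-(y ^ 2) / 2)
      = √(2 * π) / 2 + ∫ t in (0 : ℝ)..x, exp (-(t ^ 2) / 2) := by
  have hf : (fun y : ℝ ↦ exp (-(y ^ 2) / 2)) = fun y ↦ exp (-(1 / 2) * y ^ 2) := by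
    ext y; ring_nf
  have hint : Integrable fun y : ℝ ↦ exp (-(1 / 2) * y ^ 2) :=
    integrable_exp_neg_mul_sq one_half_pos
  have hhalf : ∫ y in Iic (0 : ℝ), exp (-(1 / 2) * y ^ 2) = √(2 * π) / 2 := by
    rw [← neg_zero, ← integral_comp_neg_Ioi]
    simp only [neg_sq, integral_gaussian_Ioi]
    norm_num [div_div_eq_mul_div, mul_comm]
  rw [hf, ← intervalIntegral.integral_Iic_sub_Iic hint.integrableOn hint.integrableOn, hhalf]
  ring

lemma tendsto_nhdsGT_zero_of_continuousAt {f : ℝ → ℝ} {y : ℝ} (hf : ContinuousAt f 0)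
    (hy : f 0 = y) : Tendsto f (𝓝[>] 0) (𝓝 y) :=
  hy ▸ hf.tendsto.mono_left nhdsWithin_le_nhds

lemma tendsto_add_one_div_self : Tendsto (fun m : ℝ ↦ (m + 1) / m) (𝓝[>] 0) atTop := by
  refine (tendsto_atTop_add_const_left _ 1 tendsto_inv_nhdsGT_zero).congr' ?_
  filter_upwards [self_mem_nhdsWithin] with m (hm : 0 < m)
  field_simp

lemma rhoC_pos {m : ℝ} (hm : 0 < m) : 0 < rhoC m := by
  unfold rhoC; positivity

lemma DC_pos {m : ℝ} (hm : 0 < m) : 0 < DC m :=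
  mul_pos (Real.rpow_pos_of_pos (rhoC_pos hm) _) (betaFn_pos one_half_pos (by positivity))

lemma cC_pos {m : ℝ} (hm : 0 < m) : 0 < cC m := by
  have := DC_pos hm
  have := rhoC_pos hm
  unfold cC
  positivity

lemma betaFn_one_half_eq_DC_mul {m : ℝ} (hm : 0 < m) :
    betaFn (1 / 2) ((m + 1) / m) = DC m * √(rhoC m) := by
  rw [DC, Real.rpow_neg (rhoC_pos hm).le, ← Real.sqrt_eq_rpow, mul_right_comm,
    inv_mul_cancel₀ (Real.sqrt_pos.2 (rhoC_pos hm)).ne', one_mul]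

lemma DC_eq_sqrt {m : ℝ} (hm : 0 < m) :
    DC m = √(((m + 1) / (2 * (m + 2)))⁻¹
      * ((m + 1) / m * betaFn (1 / 2) ((m + 1) / m) ^ 2)) := by
  have hB := betaFn_pos one_half_pos (by positivity : 0 < (m + 1) / m)
  have hρ : ((m + 1) / (2 * (m + 2)))⁻¹ * ((m + 1) / m) = (rhoC m)⁻¹ := by
    unfold rhoC; field_simp
  rw [← mul_assoc, hρ, Real.sqrt_mul (inv_nonneg.2 (rhoC_pos hm).le), Real.sqrt_sq hB.le, DC,
    Real.rpow_neg (rhoC_pos hm).le, Real.sqrt_inv, Real.sqrt_eq_rpow]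

lemma tendsto_DC : Tendsto DC (𝓝[>] 0) (𝓝 (2 * √π)) := by
  have hρ : Tendsto (fun m : ℝ ↦ ((m + 1) / (2 * (m + 2)))⁻¹) (𝓝[>] 0) (𝓝 4) :=
    tendsto_nhdsGT_zero_of_continuousAt (by fun_prop (disch := norm_num)) (by norm_num)
  have h := ((hρ.mul (tendsto_mul_betaFn_one_half_sq.comp tendsto_add_one_div_self)).sqrt)
  rw [Real.sqrt_mul zero_le_four, show (4 : ℝ) = 2 ^ 2 by norm_num, Real.sqrt_sq zero_le_two] at h
  refine h.congr' ?_
  filter_upwards [self_mem_nhdsWithin] with m (hm : 0 < m)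
  exact (DC_eq_sqrt hm).symm

lemma sqrt_rhoC_mul_cC {m : ℝ} (hm : 0 < m) :
    √(rhoC m) * cC m
      = (2 : ℝ) ^ ((m + 1) / (m + 2)) * (m + 1) ^ (1 / (m + 2)) / DC m ^ (m / (m + 2)) := by
  have := Real.sqrt_pos.2 (rhoC_pos hm)
  have := Real.rpow_pos_of_pos (DC_pos hm) (m / (m + 2))
  rw [cC, ← Real.sqrt_eq_rpow]
  field_simp

lemma tendsto_sqrt_rhoC_mul_cC :
    Tendsto (fun m ↦ √(rhoC m) * cC m) (𝓝[>] 0) (𝓝 √2) := by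
  have h2 : Tendsto (fun m : ℝ ↦ (2 : ℝ) ^ ((m + 1) / (m + 2))) (𝓝[>] 0) (𝓝 √2) :=
    tendsto_nhdsGT_zero_of_continuousAt (by fun_prop (disch := norm_num))
      (by norm_num [Real.sqrt_eq_rpow])
  have h1 : Tendsto (fun m : ℝ ↦ (m + 1) ^ (1 / (m + 2))) (𝓝[>] 0) (𝓝 1) :=
    tendsto_nhdsGT_zero_of_continuousAt
      ((continuousAt_id.add continuousAt_const).rpow (by fun_prop (disch := norm_num))
        (Or.inl (by norm_num))) (by norm_num)
  have hD : Tendsto (fun m ↦ DC m ^ (m / (m + 2))) (𝓝[>] 0) (𝓝 1) := by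
    have he : Tendsto (fun m : ℝ ↦ m / (m + 2)) (𝓝[>] 0) (𝓝 0) :=
      tendsto_nhdsGT_zero_of_continuousAt (by fun_prop (disch := norm_num)) (by norm_num)
    simpa using tendsto_DC.rpow he (Or.inl (by positivity))
  have h := (h2.mul h1).div hD one_ne_zero
  rw [mul_one, div_one] at h
  refine h.congr' ?_
  filter_upwards [self_mem_nhdsWithin] with m (hm : 0 < m)
  exact (sqrt_rhoC_mul_cC hm).symm

lemma tendsto_mul_cC_sq : Tendsto (fun m ↦ m * cC m ^ 2) (𝓝[>] 0) (𝓝 8) := by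
  have h2 : Tendsto (fun m : ℝ ↦ 2 * (m + 2)) (𝓝[>] 0) (𝓝 4) :=
    tendsto_nhdsGT_zero_of_continuousAt (by fun_prop) (by norm_num)
  have h := h2.mul (tendsto_sqrt_rhoC_mul_cC.pow 2)
  rw [Real.sq_sqrt zero_le_two] at h
  norm_num at h
  refine h.congr' ?_
  filter_upwards [self_mem_nhdsWithin] with m (hm : 0 < m)
  rw [mul_pow, Real.sq_sqrt (rhoC_pos hm).le, rhoC]
  field_simp

lemma tendsto_cC : Tendsto cC (𝓝[>] 0) atTop := by
  have h := Real.tendsto_sqrt_atTop.comp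
    ((tendsto_mul_cC_sq.pos_mul_atTop (by norm_num) tendsto_inv_nhdsGT_zero))
  refine h.congr' ?_
  filter_upwards [self_mem_nhdsWithin] with m (hm : 0 < m)
  simp only [Function.comp_apply]
  rw [mul_comm m, mul_assoc, mul_inv_cancel₀ hm.ne', mul_one, Real.sqrt_sq (cC_pos hm).le]

lemma tendsto_two_div_betaFn_one_half_mul_cC :
    Tendsto (fun m ↦ 2 / (betaFn (1 / 2) ((m + 1) / m) * cC m)) (𝓝[>] 0)
      (𝓝 (1 / √(2 * π))) := by
  have h := tendsto_const_nhds.div (tendsto_DC.mul tendsto_sqrt_rhoC_mul_cC)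
    (by positivity : 2 * √π * √2 ≠ 0) (a := (2 : ℝ))
  rw [show 2 / (2 * √π * √2) = 1 / √(2 * π) by
    rw [mul_assoc, Real.sqrt_mul zero_le_two, mul_comm √2]; field_simp] at h
  refine h.congr' ?_
  filter_upwards [self_mem_nhdsWithin] with m (hm : 0 < m)
  rw [betaFn_one_half_eq_DC_mul hm, mul_assoc]
  rfl

noncomputable def rescaledBetaDensity (m t : ℝ) : ℝ :=
  (betaFn ((m + 1) / m) ((m + 1) / m) * cC m)⁻¹ * betaKernel (1 / m) (1 / 2 + t / cC m)

lemma limitCDF_eq_half_add_integral {m x : ℝ} (hm : 0 < m) (hx : 2 * |x| ≤ cC m) :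
    limitCDF m x = 1 / 2 + ∫ t in (0 : ℝ)..x, rescaledBetaDensity m t := by
  have hc := cC_pos hm
  have ha : 1 / m + 1 = (m + 1) / m := by field_simp; ring
  have hB := betaFn_pos (by positivity : 0 < (m + 1) / m) (by positivity : 0 < (m + 1) / m)
  obtain ⟨hl, hr⟩ := abs_le.1 (show |x / cC m| ≤ 1 / 2 by
    rw [abs_div, abs_of_pos hc, div_le_iff₀ hc]; linarith)
  rw [limitCDF, max_eq_left (by linarith), min_eq_left (by linarith)]
  change 1 / betaFn _ _ * ∫ y in (0 : ℝ)..(1 / 2 + x / cC m), betaKernel (1 / m) y = _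
  rw [integral_betaKernel_half_add_div (by positivity) hc.ne', ha]
  simp only [rescaledBetaDensity, intervalIntegral.integral_const_mul]
  field_simp

lemma rescaledBetaDensity_eq {m t : ℝ} (hm : 0 < m) (ht : 2 * |t| ≤ cC m) :
    rescaledBetaDensity m t
      = 2 / (betaFn (1 / 2) ((m + 1) / m) * cC m) * (1 - (2 * t / cC m) ^ 2) ^ (1 / m) := by
  have hc := cC_pos hm
  have ha : (m + 1) / m - 1 = 1 / m := by field_simp; ring
  have hu : |t / cC m| ≤ 1 / 2 := by rw [abs_div, abs_of_pos hc, div_le_iff₀ hc]; linarith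
  have hdup := four_rpow_mul_betaFn_self (by positivity : 0 < (m + 1) / m)
  rw [ha] at hdup
  rw [rescaledBetaDensity, betaKernel_one_half_add hu, ← mul_div_assoc,
    show betaFn (1 / 2) ((m + 1) / m) = 2 * (4 ^ (1 / m) * betaFn ((m + 1) / m) ((m + 1) / m))
      by linarith]
  field_simp

lemma abs_rescaledBetaDensity_le {m t : ℝ} (hm : 0 < m) (ht : 2 * |t| ≤ cC m) :
    |rescaledBetaDensity m t| ≤ 2 / (betaFn (1 / 2) ((m + 1) / m) * cC m) := by
  have hc := cC_pos hm
  have hB := betaFn_pos one_half_pos (by positivity : 0 < (m + 1) / m)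
  have hu : (2 * t / cC m) ^ 2 ≤ 1 := by
    rw [div_pow, div_le_one (by positivity), mul_pow, ← sq_abs t]; nlinarith [abs_nonneg t]
  rw [rescaledBetaDensity_eq hm ht, abs_mul, abs_of_pos (by positivity),
    abs_of_nonneg (Real.rpow_nonneg (by linarith) _)]
  exact mul_le_of_le_one_right (by positivity)
    (Real.rpow_le_one (by linarith) (by linarith [sq_nonneg (2 * t / cC m)]) (by positivity))

lemma tendsto_rescaledBetaDensity (t : ℝ) :
    Tendsto (fun m ↦ rescaledBetaDensity m t) (𝓝[>] 0)
      (𝓝 (1 / √(2 * π) * exp (-t ^ 2 / 2))) := by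
  have hexp := tendsto_one_sub_div_sq_rpow tendsto_mul_cC_sq (by norm_num) (2 * t)
  rw [show -(2 * t) ^ 2 / 8 = -t ^ 2 / 2 by ring] at hexp
  refine (tendsto_two_div_betaFn_one_half_mul_cC.mul hexp).congr' ?_
  filter_upwards [tendsto_cC.eventually_ge_atTop (2 * |t|), self_mem_nhdsWithin]
    with m ht (hm : 0 < m)
  exact (rescaledBetaDensity_eq hm ht).symm

lemma tendsto_integral_rescaledBetaDensity (x : ℝ) :
    Tendsto (fun m ↦ ∫ t in (0 : ℝ)..x, rescaledBetaDensity m t) (𝓝[>] 0)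
      (𝓝 (∫ t in (0 : ℝ)..x, 1 / √(2 * π) * exp (-t ^ 2 / 2))) := by
  refine intervalIntegral.tendsto_integral_filter_of_dominated_convergence
    (fun _ ↦ 1 / √(2 * π) + 1) ?_ ?_ intervalIntegrable_const
    (ae_of_all _ fun t _ ↦ tendsto_rescaledBetaDensity t)
  · filter_upwards [self_mem_nhdsWithin] with m (hm : 0 < m)
    exact (continuous_const.mul ((continuous_betaKernel (by positivity)).comp
      (by fun_prop))).aestronglyMeasurable
  · filter_upwards [tendsto_cC.eventually_ge_atTop (2 * |x|), self_mem_nhdsWithin,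
      tendsto_two_div_betaFn_one_half_mul_cC.eventually (gt_mem_nhds (lt_add_one _))]
      with m hx (hm : 0 < m) hbound
    refine ae_of_all _ fun t ht ↦ ?_
    have htx : |t| ≤ |x| := by simpa using Set.abs_sub_left_of_mem_uIcc (Set.uIoc_subset_uIcc ht)
    exact (abs_rescaledBetaDensity_le hm (by linarith)).trans hbound.le

theorem statement14 (x : ℝ) :
    Tendsto (fun m : ℝ => limitCDF m x) (nhdsWithin 0 (Set.Ioi 0))
      (nhds ((1 / Real.sqrt (2 * π)) * ∫ y in Set.Iic x, Real.exp (-(y ^ 2) / 2))) := by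
  have h := (tendsto_integral_rescaledBetaDensity x).const_add (1 / 2)
  rw [intervalIntegral.integral_const_mul] at h
  rw [integral_Iic_exp_neg_sq_div_two, mul_add,
    show 1 / √(2 * π) * (√(2 * π) / 2) = 1 / 2 by field_simp]
  refine h.congr' ?_
  filter_upwards [tendsto_cC.eventually_ge_atTop (2 * |x|), self_mem_nhdsWithin]
    with m hx (hm : 0 < m)
  exact (limitCDF_eq_half_add_integral hm hx).symm
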